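/- arXiv:1701.06080 — 3 statements merged into one kernel-verified Lean document; each statement's English description precedes it below -/
import Mathlib

section
/- Let Γ be a self-adjoint operator with 0 ≤ Γ ≤ 1 satisfying the particle-hole symmetry J* Γ J = 1 − \overline{Γ}, and such that Γ ln Γ is trace class. Then Tr(Γ ln Γ) = Tr((1 − Γ) ln(1 − Γ)), and hence the entropy S(Γ) = −Tr(Γ ln Γ) equals Tr g(Γ) where g(λ) = −(1/2)(λ ln λ + (1−λ) ln(1−λ)). -/
/-!
The antiunitary `J C` carries an eigenvector of `Γ` with eigenvalue `λ` to one with eigenvalue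
`1 - λ`. Hence the overlap matrix `c i j = ‖⟪e i, J (C (e j))⟫‖ ^ 2` between the eigenbasis `e` and
its image `J C e` is doubly stochastic (Parseval in both directions) and vanishes unless
`λ i = 1 - λ j`. Averaging the nonnegative numbers `-λ ln λ` against such a matrix, once along rows
and once along columns, turns `∑ -λ i ln λ i` into `∑ -(1 - λ j) ln (1 - λ j)`.
-/

open scoped ENNReal InnerProductSpace ComplexConjugate

theorem ENNReal.tsum_eq_tsum_of_doublyStochastic {ι κ : Type*} {c : ι → κ → ℝ≥0∞}
    {F : ι → ℝ≥0∞} {G : κ → ℝ≥0∞} (hrow : ∀ i, ∑' j, c i j = 1) (hcol : ∀ j, ∑' i, c i j = 1)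
    (hcFG : ∀ i j, c i j * F i = c i j * G j) : ∑' i, F i = ∑' j, G j :=
  calc ∑' i, F i = ∑' i, ∑' j, c i j * F i := by simp [ENNReal.tsum_mul_right, hrow]
    _ = ∑' j, ∑' i, c i j * G j := by rw [ENNReal.tsum_comm]; simp_rw [hcFG]
    _ = ∑' j, G j := by simp [ENNReal.tsum_mul_right, hcol]

theorem HasSum.of_doublyStochastic {ι κ : Type*} {c : ι → κ → ℝ} {F : ι → ℝ} {G : κ → ℝ}
    (hc : ∀ i j, 0 ≤ c i j) (hF : ∀ i, 0 ≤ F i) (hG : ∀ j, 0 ≤ G j)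
    (hrow : ∀ i, HasSum (c i) 1) (hcol : ∀ j, HasSum (c · j) 1)
    (hcFG : ∀ i j, c i j * F i = c i j * G j) {s : ℝ} (hs : HasSum F s) : HasSum G s := by
  have hsum : ∑' j, ENNReal.ofReal (G j) = ENNReal.ofReal s := by
    rw [← hs.tsum_eq, ENNReal.ofReal_tsum_of_nonneg hF hs.summable]
    refine (ENNReal.tsum_eq_tsum_of_doublyStochastic (c := fun i j => ENNReal.ofReal (c i j))
      (fun i => ?_) (fun j => ?_) (fun i j => ?_)).symm
    · rw [← ENNReal.ofReal_tsum_of_nonneg (hc i) (hrow i).summable, (hrow i).tsum_eq,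
        ENNReal.ofReal_one]
    · rw [← ENNReal.ofReal_tsum_of_nonneg (hc · j) (hcol j).summable, (hcol j).tsum_eq,
        ENNReal.ofReal_one]
    · rw [← ENNReal.ofReal_mul (hc i j), hcFG, ENNReal.ofReal_mul (hc i j)]
  have hGsum : Summable G := (ENNReal.summable_toReal (hsum ▸ ENNReal.ofReal_ne_top)).congr
    fun j => ENNReal.toReal_ofReal (hG j)
  rw [← ENNReal.ofReal_tsum_of_nonneg hG hGsum, ENNReal.ofReal_eq_ofReal_iff (tsum_nonneg hG)
    (hs.nonneg hF)] at hsum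
  exact hsum ▸ hGsum.hasSum

section

variable {𝕜 E : Type*} [RCLike 𝕜] [NormedAddCommGroup E] [InnerProductSpace 𝕜 E]

theorem norm_map_of_inner_self_map {f : E → E} (hf : ∀ x, ⟪f x, f x⟫_𝕜 = ⟪x, x⟫_𝕜) (x : E) :
    ‖f x‖ = ‖x‖ := by
  rw [norm_eq_sqrt_re_inner (𝕜 := 𝕜), hf, ← norm_eq_sqrt_re_inner]

theorem HilbertBasis.hasSum_norm_inner_sq {ι : Type*} (e : HilbertBasis ι 𝕜 E) (x : E) :
    HasSum (fun i => ‖⟪e i, x⟫_𝕜‖ ^ 2) (‖x‖ ^ 2) := by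
  simpa [e.repr_apply_apply] using lp.hasSum_norm (p := 2) (by norm_num) (e.repr x)

theorem ContinuousLinearMap.adjoint_eq_neg_self [CompleteSpace E] {J : E →L[𝕜] E}
    (hJJ : ∀ x, J (J x) = -x) (hJiso : ∀ x y, ⟪J x, J y⟫_𝕜 = ⟪x, y⟫_𝕜) : adjoint J = -J := by
  refine ContinuousLinearMap.ext fun x => ext_inner_right 𝕜 fun y => ?_
  calc ⟪adjoint J x, y⟫_𝕜 = ⟪J (J (-x)), J y⟫_𝕜 := by
        rw [adjoint_inner_left, hJJ, neg_neg]
    _ = ⟪(-J) x, y⟫_𝕜 := by rw [hJiso, map_neg, neg_apply]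

theorem HilbertBasis.inner_eq_zero_of_eigenvalue_ne [CompleteSpace E] {ι : Type*}
    (T : E →L[𝕜] E) (e : HilbertBasis ι 𝕜 E) (lam : ι → ℝ)
    (heig : ∀ i, T (e i) = (lam i : 𝕜) • e i) {v : E} {μ : ℝ} (hv : T v = (μ : 𝕜) • v) {i : ι}
    (hne : lam i ≠ μ) : ⟪e i, v⟫_𝕜 = 0 := by
  have hadj : T.adjoint (e i) = (lam i : 𝕜) • e i := by
    refine e.repr.injective (lp.ext (funext fun k => ?_))
    rw [e.repr_apply_apply, e.repr_apply_apply, ContinuousLinearMap.adjoint_inner_right, heig,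
      inner_smul_left, inner_smul_right, RCLike.conj_ofReal]
    rcases eq_or_ne k i with rfl | hki
    · rfl
    · rw [e.orthonormal.2 hki, mul_zero, mul_zero]
  have h : ((lam i : 𝕜) - μ) * ⟪e i, v⟫_𝕜 = 0 := by
    rw [sub_mul, ← RCLike.conj_ofReal, ← inner_smul_left, ← hadj,
      ContinuousLinearMap.adjoint_inner_left, hv, inner_smul_right, sub_self]
  exact (mul_eq_zero.mp h).resolve_left (sub_ne_zero.mpr (by exact_mod_cast hne))

end

section ParticleHole

variable {K : Type*} [NormedAddCommGroup K] [InnerProductSpace ℂ K] {J : K →L[ℂ] K} {C : K → K}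

theorem inner_apply_conj_eq_neg (hJJ : ∀ x, J (J x) = -x)
    (hJiso : ∀ x y, ⟪J x, J y⟫_ℂ = ⟪x, y⟫_ℂ) (hCC : ∀ x, C (C x) = x)
    (hCsmul : ∀ (c : ℂ) (x : K), C (c • x) = conj c • C x)
    (hCinner : ∀ x y, ⟪C x, C y⟫_ℂ = ⟪y, x⟫_ℂ) (u w : K) :
    ⟪w, J (C u)⟫_ℂ = -⟪u, C (J w)⟫_ℂ := by
  have hCneg : C (-J w) = -C (J w) := by
    simpa using hCsmul (-1) (J w)
  calc ⟪w, J (C u)⟫_ℂ = ⟪J (J (-w)), J (C u)⟫_ℂ := by rw [hJJ, neg_neg]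
    _ = ⟪C (C u), C (J (-w))⟫_ℂ := by rw [hJiso, hCinner]
    _ = -⟪u, C (J w)⟫_ℂ := by rw [hCC, map_neg, hCneg, inner_neg_right]

theorem apply_apply_conj_of_apply_eq_smul [CompleteSpace K] {Γ : K →L[ℂ] K}
    (hJJ : ∀ x, J (J x) = -x) (hJiso : ∀ x y, ⟪J x, J y⟫_ℂ = ⟪x, y⟫_ℂ)
    (hCC : ∀ x, C (C x) = x) (hCsmul : ∀ (c : ℂ) (x : K), C (c • x) = conj c • C x)
    (hsym : ∀ x, ContinuousLinearMap.adjoint J (Γ (J x)) = x - C (Γ (C x)))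
    {v : K} {μ : ℝ} (hv : Γ v = (μ : ℂ) • v) :
    Γ (J (C v)) = ((1 - μ : ℝ) : ℂ) • J (C v) := by
  have h := hsym (C v)
  rw [hCC, hv, hCsmul, Complex.conj_ofReal, ContinuousLinearMap.adjoint_eq_neg_self hJJ hJiso,
    neg_apply] at h
  calc Γ (J (C v)) = J (-J (Γ (J (C v)))) := by rw [map_neg, hJJ, neg_neg]
    _ = ((1 - μ : ℝ) : ℂ) • J (C v) := by
      rw [h, map_sub, map_smul]
      push_cast
      rw [sub_smul, one_smul]

end ParticleHole

theorem stmt_3_general {K : Type*} [NormedAddCommGroup K] [InnerProductSpace ℂ K] [CompleteSpace K]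
    {ι : Type*}
    (Γ J : K →L[ℂ] K) (C : K → K)
    (hJJ : ∀ x, J (J x) = -x)
    (hJiso : ∀ x y, ⟪J x, J y⟫_ℂ = ⟪x, y⟫_ℂ)
    (hCC : ∀ x, C (C x) = x)
    (hCsmul : ∀ (c : ℂ) (x : K), C (c • x) = conj c • C x)
    (hCinner : ∀ x y, ⟪C x, C y⟫_ℂ = ⟪y, x⟫_ℂ)
    (e : HilbertBasis ι ℂ K) (lam : ι → ℝ)
    (heig : ∀ i, Γ (e i) = (lam i : ℂ) • e i)
    (hlam0 : ∀ i, 0 ≤ lam i) (hlam1 : ∀ i, lam i ≤ 1)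
    (hsym : ∀ x, ContinuousLinearMap.adjoint J (Γ (J x)) = x - C (Γ (C x)))
    (htc : Summable fun i => lam i * Real.log (lam i)) :
    (∑' i, lam i * Real.log (lam i)) = (∑' i, (1 - lam i) * Real.log (1 - lam i)) ∧
    (-∑' i, lam i * Real.log (lam i))
      = ∑' i, -(1 / 2) * (lam i * Real.log (lam i) + (1 - lam i) * Real.log (1 - lam i)) := by
  have hnorm : ∀ x, ‖J (C x)‖ = ‖x‖ ∧ ‖C (J x)‖ = ‖x‖ := fun x => by
    simp only [norm_map_of_inner_self_map (𝕜 := ℂ) (fun x => hJiso x x),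
      norm_map_of_inner_self_map (𝕜 := ℂ) (fun x => hCinner x x), and_self]
  set c : ι → ι → ℝ := fun i j => ‖⟪e i, J (C (e j))⟫_ℂ‖ ^ 2
  have hcol : ∀ j, HasSum (c · j) 1 := fun j => by
    simpa [(hnorm (e j)).1, e.orthonormal.1 j] using e.hasSum_norm_inner_sq (J (C (e j)))
  have hrow : ∀ i, HasSum (c i) 1 := fun i => by
    simpa [c, inner_apply_conj_eq_neg hJJ hJiso hCC hCsmul hCinner, (hnorm (e i)).2,
      e.orthonormal.1 i] using e.hasSum_norm_inner_sq (C (J (e i)))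
  have hcFG : ∀ i j, c i j * Real.negMulLog (lam i) = c i j * Real.negMulLog (1 - lam j) := by
    intro i j
    rcases eq_or_ne (lam i) (1 - lam j) with h | h
    · rw [h]
    · simp [c, e.inner_eq_zero_of_eigenvalue_ne Γ lam heig
        (apply_apply_conj_of_apply_eq_smul hJJ hJiso hCC hCsmul hsym (heig j)) h]
  have hhole : HasSum (fun j => (1 - lam j) * Real.log (1 - lam j))
      (∑' i, lam i * Real.log (lam i)) := by
    have hpart : HasSum (fun i => Real.negMulLog (lam i)) (-∑' i, lam i * Real.log (lam i)) := by
      simpa [Real.negMulLog_eq_neg] using htc.hasSum.neg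
    simpa [Real.negMulLog_eq_neg] using (hpart.of_doublyStochastic (fun _ _ => sq_nonneg _)
      (fun i => Real.negMulLog_nonneg (hlam0 i) (hlam1 i))
      (fun j => Real.negMulLog_nonneg (by linarith [hlam1 j]) (by linarith [hlam0 j]))
      hrow hcol hcFG).neg
  refine ⟨hhole.tsum_eq.symm, ?_⟩
  rw [((htc.hasSum.add hhole).mul_left (-(1 / 2))).tsum_eq]
  ring

/-- Let `Γ` be a self-adjoint operator with `0 ≤ Γ ≤ 1` (given here by an
orthonormal eigenbasis `e` with eigenvalues `λ i ∈ [0,1]`) on a Hilbert space `K`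
(playing the role of `H ⊕ H`), satisfying the particle-hole symmetry
`J* Γ J = 1 − Γ̄`, where `J` is the (unitary) symplectic operator with `J² = −1` and
`Γ̄ = C Γ C` for a conjugation `C`.  If `Γ ln Γ` is trace class, then
`Tr(Γ ln Γ) = Tr((1 − Γ) ln(1 − Γ))`, and hence the entropy `S(Γ) = −Tr(Γ ln Γ)`
equals `Tr g(Γ)` with `g(λ) = −(1/2)(λ ln λ + (1−λ) ln(1−λ))` (convention
`0 ln 0 = 0`). -/
theorem stmt_3 {K : Type*} [NormedAddCommGroup K] [InnerProductSpace ℂ K] [CompleteSpace K]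
    {ι : Type*}
    (Γ J : K →L[ℂ] K) (C : K → K)
    (hJJ : ∀ x, J (J x) = -x)
    (hJiso : ∀ x y, ⟪J x, J y⟫_ℂ = ⟪x, y⟫_ℂ)
    (hCC : ∀ x, C (C x) = x)
    (hCadd : ∀ x y, C (x + y) = C x + C y)
    (hCsmul : ∀ (c : ℂ) (x : K), C (c • x) = conj c • C x)
    (hCinner : ∀ x y, ⟪C x, C y⟫_ℂ = ⟪y, x⟫_ℂ)
    (e : HilbertBasis ι ℂ K) (lam : ι → ℝ)
    (heig : ∀ i, Γ (e i) = (lam i : ℂ) • e i)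
    (hlam0 : ∀ i, 0 ≤ lam i) (hlam1 : ∀ i, lam i ≤ 1)
    (hsym : ∀ x, ContinuousLinearMap.adjoint J (Γ (J x)) = x - C (Γ (C x)))
    (htc : Summable fun i => lam i * Real.log (lam i)) :
    (∑' i, lam i * Real.log (lam i)) = (∑' i, (1 - lam i) * Real.log (1 - lam i)) ∧
    (-∑' i, lam i * Real.log (lam i))
      = ∑' i, -(1 / 2) * (lam i * Real.log (lam i) + (1 - lam i) * Real.log (1 - lam i)) :=
  stmt_3_general Γ J C hJJ hJiso hCC hCsmul hCinner e lam heig hlam0 hlam1 hsym htc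
end

section
/- Let γ, α be bounded operators on a Hilbert space H with γ self-adjoint, and suppose the block operator Γ = [[γ, α],[α*, 1 − \overline{γ}]] satisfies 0 ≤ Γ ≤ 1. Then: (1) 0 ≤ Γ(1 − Γ) ≤ 1; (2) α α* ≤ γ(1 − γ) and α* α ≤ \overline{γ}(1 − \overline{γ}); (3) for any bounded operator M, if M γ M* is trace class then M α α* M* is trace class and Tr(M α α* M*) ≤ Tr(M γ M*). -/
/-
Realise `Γ` as a symmetric operator on the `ℓ²`-sum `H ⊕ H`. For a symmetric `T` with
`0 ≤ T ≤ 1`, positivity of `T` at `x - T x` together with `T ≤ 1` at `T x` gives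
`‖T x‖² ≤ ⟪x, T x⟫`; since `⟪x, T (1 - T) x⟫ = ⟪x, T x⟫ - ‖T x‖²`, this is (1).
Evaluated at `(x, 0)` and `(0, y)` this inequality reads `‖γ x‖² + ‖α* x‖² ≤ ⟪x, γ x⟫` and
`‖α y‖² + ‖(1 - γ̄) y‖² ≤ ⟪y, (1 - γ̄) y⟫`, i.e. the operator inequalities (2), since `γ̄` is
self-adjoint along with `γ`. Then `α α* ≤ γ - γ² ≤ γ`, and conjugating by `M` and comparing
diagonal entries in the basis gives (3).
-/

open scoped InnerProductSpace ComplexConjugate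

open RCLike ContinuousLinearMap

section

variable {𝕜 E F : Type*} [RCLike 𝕜] [NormedAddCommGroup E] [InnerProductSpace 𝕜 E]
  [NormedAddCommGroup F] [InnerProductSpace 𝕜 F]

namespace LinearMap.IsSymmetric

variable {T : E →ₗ[𝕜] E}

lemma re_inner_apply_sub_apply (hT : T.IsSymmetric) (x : E) :
    re ⟪x, T (x - T x)⟫_𝕜 = re ⟪x, T x⟫_𝕜 - ‖T x‖ ^ 2 := by
  rw [map_sub, inner_sub_right, map_sub, ← hT x (T x), inner_self_eq_norm_sq]

lemma norm_sq_apply_le_re_inner (hT : T.IsSymmetric) (h0 : ∀ x, 0 ≤ re ⟪x, T x⟫_𝕜)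
    (h1 : ∀ x, re ⟪x, T x⟫_𝕜 ≤ ‖x‖ ^ 2) (x : E) : ‖T x‖ ^ 2 ≤ re ⟪x, T x⟫_𝕜 := by
  have hpos := h0 (x - T x)
  have hle := h1 (T x)
  rw [inner_sub_left, map_sub, re_inner_apply_sub_apply hT, map_sub T, inner_sub_right,
    map_sub, inner_self_eq_norm_sq] at hpos
  linarith

lemma re_inner_apply_sub_apply_nonneg (hT : T.IsSymmetric) (h0 : ∀ x, 0 ≤ re ⟪x, T x⟫_𝕜)
    (h1 : ∀ x, re ⟪x, T x⟫_𝕜 ≤ ‖x‖ ^ 2) (x : E) : 0 ≤ re ⟪x, T (x - T x)⟫_𝕜 := by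
  rw [hT.re_inner_apply_sub_apply]
  linarith [hT.norm_sq_apply_le_re_inner h0 h1 x]

lemma re_inner_apply_sub_apply_le (hT : T.IsSymmetric) (h1 : ∀ x, re ⟪x, T x⟫_𝕜 ≤ ‖x‖ ^ 2)
    (x : E) : re ⟪x, T (x - T x)⟫_𝕜 ≤ ‖x‖ ^ 2 := by
  rw [hT.re_inner_apply_sub_apply]
  linarith [h1 x, sq_nonneg ‖T x‖]

end LinearMap.IsSymmetric

noncomputable def blockOp (A : E →L[𝕜] E) (B : F →L[𝕜] E) (C : E →L[𝕜] F) (D : F →L[𝕜] F) :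
    WithLp 2 (E × F) →ₗ[𝕜] WithLp 2 (E × F) :=
  (WithLp.linearEquiv 2 𝕜 (E × F)).symm.toLinearMap ∘ₗ
    ((A.coprod B).prod (C.coprod D) : E × F →ₗ[𝕜] E × F) ∘ₗ
    (WithLp.linearEquiv 2 𝕜 (E × F)).toLinearMap

@[simp]
lemma blockOp_toLp (A : E →L[𝕜] E) (B : F →L[𝕜] E) (C : E →L[𝕜] F) (D : F →L[𝕜] F)
    (x : E × F) :
    blockOp A B C D (WithLp.toLp 2 x) = WithLp.toLp 2 (A x.1 + B x.2, C x.1 + D x.2) :=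
  rfl

lemma summable_re_inner_apply_of_le {ι : Type*} {S T : E →L[𝕜] E} (hS : 0 ≤ S) (hST : S ≤ T)
    (e : ι → E) (hT : Summable fun i => re ⟪e i, T (e i)⟫_𝕜) :
    Summable (fun i => re ⟪e i, S (e i)⟫_𝕜) ∧
      ∑' i, re ⟪e i, S (e i)⟫_𝕜 ≤ ∑' i, re ⟪e i, T (e i)⟫_𝕜 := by
  have hle : ∀ i, re ⟪e i, S (e i)⟫_𝕜 ≤ re ⟪e i, T (e i)⟫_𝕜 := fun i => by
    simpa [inner_sub_right] using hST.re_inner_nonneg_right (e i)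
  have hsum := Summable.of_nonneg_of_le
    (fun i => ((nonneg_iff_isPositive S).mp hS).re_inner_nonneg_right (e i)) hle hT
  exact ⟨hsum, hsum.tsum_le_tsum hle hT⟩

section Complete

variable [CompleteSpace E] [CompleteSpace F]

lemma isSymmetric_blockOp {A : E →L[𝕜] E} {D : F →L[𝕜] F} (hA : IsSelfAdjoint A)
    (hD : IsSelfAdjoint D) (B : F →L[𝕜] E) :
    (blockOp A B (adjoint B) D).IsSymmetric := by
  have hA_symm : ∀ x y, ⟪A x, y⟫_𝕜 = ⟪x, A y⟫_𝕜 := hA.isSymmetric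
  have hD_symm : ∀ x y, ⟪D x, y⟫_𝕜 = ⟪x, D y⟫_𝕜 := hD.isSymmetric
  rintro ⟨x⟩ ⟨y⟩
  simp only [blockOp_toLp, WithLp.prod_inner_apply, inner_add_left, inner_add_right,
    adjoint_inner_left, adjoint_inner_right, hA_symm, hD_symm]
  ring

lemma IsSelfAdjoint.of_antiunitary_conj {C : E → E} (hCC : ∀ x, C (C x) = x)
    (hCinner : ∀ x y, ⟪C x, C y⟫_𝕜 = ⟪y, x⟫_𝕜) {A A' : E →L[𝕜] E} (hA : IsSelfAdjoint A)
    (hA' : ∀ x, A' x = C (A (C x))) : IsSelfAdjoint A' := by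
  have hA_symm : ∀ x y, ⟪A x, y⟫_𝕜 = ⟪x, A y⟫_𝕜 := hA.isSymmetric
  refine isSelfAdjoint_iff_isSymmetric.mpr fun x y => ?_
  calc ⟪A' x, y⟫_𝕜 = ⟪C (A (C x)), C (C y)⟫_𝕜 := by rw [hA', hCC]
    _ = ⟪A (C y), C x⟫_𝕜 := by rw [hCinner, hA_symm]
    _ = ⟪C (C x), C (A (C y))⟫_𝕜 := by rw [hCinner]
    _ = ⟪x, A' y⟫_𝕜 := by rw [hA', hCC]

lemma isPositive_mul_one_sub_sub_adjoint_comp {A : E →L[𝕜] E} (hA : IsSelfAdjoint A)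
    (B : E →L[𝕜] F) (h : ∀ x, ‖A x‖ ^ 2 + ‖B x‖ ^ 2 ≤ re ⟪x, A x⟫_𝕜) :
    (A * (1 - A) - adjoint B ∘L B).IsPositive := by
  have hA_symm : ∀ x y, ⟪A x, y⟫_𝕜 = ⟪x, A y⟫_𝕜 := hA.isSymmetric
  refine ⟨fun x y => ?_, fun x => ?_⟩
  · simp only [coe_coe, sub_apply, mul_apply_eq_comp, one_apply_eq_self, comp_apply, map_sub,
      inner_sub_left, inner_sub_right, hA_symm, adjoint_inner_left, adjoint_inner_right]
  · have hx := h x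
    rw [reApplyInnerSelf, sub_apply, mul_apply_eq_comp, comp_apply, sub_apply, one_apply_eq_self,
      map_sub, inner_sub_left, inner_sub_left, hA_symm (A x) x, adjoint_inner_left, map_sub,
      map_sub, inner_self_eq_norm_sq, inner_self_eq_norm_sq, inner_re_symm]
    linarith

lemma isPositive_corners_of_norm_sq_blockOp_le {A : E →L[𝕜] E} {D : F →L[𝕜] F}
    (hA : IsSelfAdjoint A) (hD : IsSelfAdjoint D) (B : F →L[𝕜] E)
    (h : ∀ x, ‖blockOp A B (adjoint B) D x‖ ^ 2 ≤ re ⟪x, blockOp A B (adjoint B) D x⟫_𝕜) :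
    (A * (1 - A) - B ∘L adjoint B).IsPositive ∧ (D * (1 - D) - adjoint B ∘L B).IsPositive := by
  constructor
  · simpa only [adjoint_adjoint] using
      isPositive_mul_one_sub_sub_adjoint_comp hA (adjoint B) fun x => by
        simpa [WithLp.prod_norm_sq_eq_of_L2] using h (WithLp.toLp 2 (x, 0))
  · exact isPositive_mul_one_sub_sub_adjoint_comp hD B fun x => by
      simpa [WithLp.prod_norm_sq_eq_of_L2, add_comm] using h (WithLp.toLp 2 (0, x))

end Complete

lemma mul_adjoint_le_of_isPositive {H : Type*} [NormedAddCommGroup H] [InnerProductSpace ℂ H]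
    [CompleteSpace H] {γ : H →L[ℂ] H} (hγ : IsSelfAdjoint γ) {α : H →L[ℂ] H}
    (h : (γ * (1 - γ) - α * adjoint α).IsPositive) : α * adjoint α ≤ γ := calc
  α * adjoint α ≤ γ * (1 - γ) := h
  _ ≤ γ := by
    rw [mul_sub, mul_one, sub_le_self_iff]
    simpa [hγ.star_eq] using star_mul_self_nonneg γ

end

theorem stmt_5_general {H : Type*} {ι : Type*} [NormedAddCommGroup H] [InnerProductSpace ℂ H]
    [CompleteSpace H]
    (C : H → H)
    (hCC : ∀ x, C (C x) = x)
    (hCinner : ∀ x y, ⟪C x, C y⟫_ℂ = ⟪y, x⟫_ℂ)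
    (γ α γbar : H →L[ℂ] H) (hγ : IsSelfAdjoint γ)
    (hγbar : ∀ x, γbar x = C (γ (C x)))
    (Γfun : H × H → H × H)
    (hΓ : ∀ p, Γfun p = (γ p.1 + α p.2,
      ContinuousLinearMap.adjoint α p.1 + p.2 - γbar p.2))
    (hΓpos : ∀ p : H × H, 0 ≤ (⟪p.1, (Γfun p).1⟫_ℂ + ⟪p.2, (Γfun p).2⟫_ℂ).re)
    (hΓle1 : ∀ p : H × H,
      (⟪p.1, (Γfun p).1⟫_ℂ + ⟪p.2, (Γfun p).2⟫_ℂ).re ≤ ‖p.1‖ ^ 2 + ‖p.2‖ ^ 2) :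
    -- (1): 0 ≤ Γ(1−Γ) ≤ 1
    ((∀ p : H × H,
        0 ≤ (⟪p.1, (Γfun (p - Γfun p)).1⟫_ℂ + ⟪p.2, (Γfun (p - Γfun p)).2⟫_ℂ).re) ∧
     (∀ p : H × H,
        (⟪p.1, (Γfun (p - Γfun p)).1⟫_ℂ + ⟪p.2, (Γfun (p - Γfun p)).2⟫_ℂ).re
          ≤ ‖p.1‖ ^ 2 + ‖p.2‖ ^ 2)) ∧
    -- (2): αα* ≤ γ(1−γ) and α*α ≤ γ̄(1−γ̄)
    ((γ * (1 - γ) - α * ContinuousLinearMap.adjoint α).IsPositive ∧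
     (γbar * (1 - γbar) - ContinuousLinearMap.adjoint α * α).IsPositive) ∧
    -- (3): Tr(M αα* M*) ≤ Tr(M γ M*)
    (∀ (M : H →L[ℂ] H) (e : HilbertBasis ι ℂ H),
      Summable (fun i => (⟪e i, (M * γ * ContinuousLinearMap.adjoint M) (e i)⟫_ℂ).re) →
      Summable (fun i => (⟪e i,
        (M * (α * ContinuousLinearMap.adjoint α) * ContinuousLinearMap.adjoint M)
          (e i)⟫_ℂ).re) ∧
      (∑' i, (⟪e i,
          (M * (α * ContinuousLinearMap.adjoint α) * ContinuousLinearMap.adjoint M)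
            (e i)⟫_ℂ).re)
        ≤ ∑' i, (⟪e i, (M * γ * ContinuousLinearMap.adjoint M) (e i)⟫_ℂ).re) := by
  set Γ := blockOp γ α (adjoint α) (1 - γbar)
  have hD : IsSelfAdjoint (1 - γbar) :=
    (IsSelfAdjoint.one _).sub (hγ.of_antiunitary_conj hCC hCinner hγbar)
  have hΓ_symm : Γ.IsSymmetric := isSymmetric_blockOp hγ hD α
  have hΓfun : ∀ p, WithLp.toLp 2 (Γfun p) = Γ (WithLp.toLp 2 p) := fun p => by
    rw [hΓ, blockOp_toLp, sub_apply, one_apply_eq_self, add_sub_assoc]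
  have hΓfun_sub : ∀ p, WithLp.toLp 2 (p - Γfun p) = WithLp.toLp 2 p - Γ (WithLp.toLp 2 p) :=
    fun p => by rw [WithLp.toLp_sub, hΓfun]
  have hform : ∀ p q : H × H, (⟪p.1, (Γfun q).1⟫_ℂ + ⟪p.2, (Γfun q).2⟫_ℂ).re
      = re ⟪WithLp.toLp 2 p, Γ (WithLp.toLp 2 q)⟫_ℂ := fun p q => by
    rw [← hΓfun, WithLp.prod_inner_apply]; rfl
  have hnorm : ∀ p : H × H, ‖p.1‖ ^ 2 + ‖p.2‖ ^ 2 = ‖WithLp.toLp 2 p‖ ^ 2 := fun p =>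
    (WithLp.prod_norm_sq_eq_of_L2 _).symm
  have h0 : ∀ x, 0 ≤ re ⟪x, Γ x⟫_ℂ := fun x => by
    simpa only [hform, WithLp.toLp_ofLp] using hΓpos (WithLp.ofLp x)
  have h1 : ∀ x, re ⟪x, Γ x⟫_ℂ ≤ ‖x‖ ^ 2 := fun x => by
    simpa only [hform, hnorm, WithLp.toLp_ofLp] using hΓle1 (WithLp.ofLp x)
  obtain ⟨hpos₁, hpos₂⟩ := isPositive_corners_of_norm_sq_blockOp_le hγ hD α
    (hΓ_symm.norm_sq_apply_le_re_inner h0 h1)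
  refine ⟨⟨fun p => ?_, fun p => ?_⟩, ⟨hpos₁, ?_⟩, fun M e hsum => ?_⟩
  · rw [hform, hΓfun_sub]
    exact hΓ_symm.re_inner_apply_sub_apply_nonneg h0 h1 _
  · rw [hform, hΓfun_sub, hnorm]
    exact hΓ_symm.re_inner_apply_sub_apply_le h1 _
  · convert hpos₂ using 1
    noncomm_ring
  · simp only [← star_eq_adjoint] at hsum ⊢
    exact summable_re_inner_apply_of_le (star_right_conjugate_nonneg (mul_star_self_nonneg α) M)
      (star_right_conjugate_le_conjugate (mul_adjoint_le_of_isPositive hγ hpos₁) M) e hsum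

/-- Let `γ`, `α` be bounded operators on `H` with `γ` self-adjoint, and
suppose the block operator `Γ = [[γ, α],[α*, 1 − γ̄]]` on `H ⊕ H` satisfies
`0 ≤ Γ ≤ 1` (expressed via its quadratic form).  Then:
(1) `0 ≤ Γ(1 − Γ) ≤ 1` (again via the quadratic form);
(2) `α α* ≤ γ(1 − γ)` and `α* α ≤ γ̄(1 − γ̄)` in the Loewner order;
(3) for any bounded `M`, if `M γ M*` is trace class (its basis trace sums), then so is
`M α α* M*` and `Tr(M α α* M*) ≤ Tr(M γ M*)`. -/
theorem stmt_5 {H : Type*} {ι : Type*} [NormedAddCommGroup H] [InnerProductSpace ℂ H]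
    [CompleteSpace H]
    (C : H → H)
    (hCC : ∀ x, C (C x) = x)
    (hCadd : ∀ x y, C (x + y) = C x + C y)
    (hCsmul : ∀ (c : ℂ) (x : H), C (c • x) = conj c • C x)
    (hCinner : ∀ x y, ⟪C x, C y⟫_ℂ = ⟪y, x⟫_ℂ)
    (γ α γbar : H →L[ℂ] H) (hγ : IsSelfAdjoint γ)
    (hγbar : ∀ x, γbar x = C (γ (C x)))
    (Γfun : H × H → H × H)
    (hΓ : ∀ p, Γfun p = (γ p.1 + α p.2,
      ContinuousLinearMap.adjoint α p.1 + p.2 - γbar p.2))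
    (hΓpos : ∀ p : H × H, 0 ≤ (⟪p.1, (Γfun p).1⟫_ℂ + ⟪p.2, (Γfun p).2⟫_ℂ).re)
    (hΓle1 : ∀ p : H × H,
      (⟪p.1, (Γfun p).1⟫_ℂ + ⟪p.2, (Γfun p).2⟫_ℂ).re ≤ ‖p.1‖ ^ 2 + ‖p.2‖ ^ 2) :
    -- (1): 0 ≤ Γ(1−Γ) ≤ 1
    ((∀ p : H × H,
        0 ≤ (⟪p.1, (Γfun (p - Γfun p)).1⟫_ℂ + ⟪p.2, (Γfun (p - Γfun p)).2⟫_ℂ).re) ∧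
     (∀ p : H × H,
        (⟪p.1, (Γfun (p - Γfun p)).1⟫_ℂ + ⟪p.2, (Γfun (p - Γfun p)).2⟫_ℂ).re
          ≤ ‖p.1‖ ^ 2 + ‖p.2‖ ^ 2)) ∧
    -- (2): αα* ≤ γ(1−γ) and α*α ≤ γ̄(1−γ̄)
    ((γ * (1 - γ) - α * ContinuousLinearMap.adjoint α).IsPositive ∧
     (γbar * (1 - γbar) - ContinuousLinearMap.adjoint α * α).IsPositive) ∧
    -- (3): Tr(M αα* M*) ≤ Tr(M γ M*)
    (∀ (M : H →L[ℂ] H) (e : HilbertBasis ι ℂ H),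
      Summable (fun i => (⟪e i, (M * γ * ContinuousLinearMap.adjoint M) (e i)⟫_ℂ).re) →
      Summable (fun i => (⟪e i,
        (M * (α * ContinuousLinearMap.adjoint α) * ContinuousLinearMap.adjoint M)
          (e i)⟫_ℂ).re) ∧
      (∑' i, (⟪e i,
          (M * (α * ContinuousLinearMap.adjoint α) * ContinuousLinearMap.adjoint M)
            (e i)⟫_ℂ).re)
        ≤ ∑' i, (⟪e i, (M * γ * ContinuousLinearMap.adjoint M) (e i)⟫_ℂ).re) :=
  stmt_5_general C hCC hCinner γ α γbar hγ hγbar Γfun hΓ hΓpos hΓle1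
end

section
/- Let ξ be a positive compact self-adjoint operator that is trace class, with eigenvalues (μ_n). Then the function t ↦ ‖ξ(ξ + t)^{-1}‖_{HS}² is integrable on (0, ∞) and ∫₀^∞ ‖ξ(ξ + t)^{-1}‖_{HS}² dt = ∑_n μ_n = Tr ξ, using ∫₀^∞ μ²/(μ + t)² dt = μ for each μ > 0. -/
/-!
Since `-m² / (m + t)` is an antiderivative of `m² / (m + t)²` vanishing at infinity, each term
integrates to `m` over `(0, ∞)`. The terms are nonnegative, so the series and the integral can be
interchanged in the Lebesgue integral, and summability of `μ` makes the sum of the integrals finite.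
-/

open MeasureTheory Set Filter Topology

namespace MeasureTheory

variable {α ι : Type*} [MeasurableSpace α] {μ : Measure α} [Countable ι] {F : ι → α → ℝ}

/-- No summability is needed: where the series diverges, both sides are `0` by convention. -/
lemma tsum_ae_eq_toReal_tsum_ofReal (hF_nonneg : ∀ i, 0 ≤ᵐ[μ] F i) :
    (fun a ↦ ∑' i, F i a) =ᵐ[μ] fun a ↦ (∑' i, ENNReal.ofReal (F i a)).toReal := by
  filter_upwards [ae_all_iff.2 hF_nonneg] with a ha
  rw [ENNReal.tsum_toReal_eq fun i ↦ ENNReal.ofReal_ne_top]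
  exact tsum_congr fun i ↦ (ENNReal.toReal_ofReal (ha i)).symm

lemma lintegral_tsum_ofReal_of_nonneg (hF_int : ∀ i, Integrable (F i) μ)
    (hF_nonneg : ∀ i, 0 ≤ᵐ[μ] F i) (hF_sum : Summable fun i ↦ ∫ a, F i a ∂μ) :
    ∫⁻ a, ∑' i, ENNReal.ofReal (F i a) ∂μ = ENNReal.ofReal (∑' i, ∫ a, F i a ∂μ) := by
  rw [lintegral_tsum fun i ↦ (hF_int i).aemeasurable.ennreal_ofReal,
    ENNReal.ofReal_tsum_of_nonneg (fun i ↦ integral_nonneg_of_ae (hF_nonneg i)) hF_sum]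
  exact tsum_congr fun i ↦ (ofReal_integral_eq_lintegral_ofReal (hF_int i) (hF_nonneg i)).symm

lemma Integrable.tsum_of_nonneg (hF_int : ∀ i, Integrable (F i) μ)
    (hF_nonneg : ∀ i, 0 ≤ᵐ[μ] F i) (hF_sum : Summable fun i ↦ ∫ a, F i a ∂μ) :
    Integrable (fun a ↦ ∑' i, F i a) μ := by
  refine (integrable_toReal_of_lintegral_ne_top ?_ ?_).congr
    (tsum_ae_eq_toReal_tsum_ofReal hF_nonneg).symm
  · exact AEMeasurable.tsum fun i ↦ (hF_int i).aemeasurable.ennreal_ofReal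
  · rw [lintegral_tsum_ofReal_of_nonneg hF_int hF_nonneg hF_sum]
    exact ENNReal.ofReal_ne_top

lemma integral_tsum_of_nonneg (hF_int : ∀ i, Integrable (F i) μ)
    (hF_nonneg : ∀ i, 0 ≤ᵐ[μ] F i) (hF_sum : Summable fun i ↦ ∫ a, F i a ∂μ) :
    ∫ a, ∑' i, F i a ∂μ = ∑' i, ∫ a, F i a ∂μ := by
  have hnorm : ∀ i, ∫ a, ‖F i a‖ ∂μ = ∫ a, F i a ∂μ := fun i ↦
    integral_congr_ae <| (hF_nonneg i).mono fun a ha ↦ Real.norm_of_nonneg ha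
  exact (integral_tsum_of_summable_integral_norm hF_int (by simpa only [hnorm] using hF_sum)).symm

end MeasureTheory

section SqDivAddSq

variable {m : ℝ}

lemma hasDerivAt_neg_sq_div_add (hm : 0 < m) {t : ℝ} (ht : 0 ≤ t) :
    HasDerivAt (fun s ↦ -(m ^ 2 / (m + s))) (m ^ 2 / (m + t) ^ 2) t := by
  simp only [div_eq_mul_inv]
  exact ((((hasDerivAt_id' t).const_add m).inv (by positivity)).const_mul (m ^ 2)).fun_neg
    |>.congr_deriv (by ring)

lemma tendsto_neg_sq_div_add_atTop (m : ℝ) :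
    Tendsto (fun s ↦ -(m ^ 2 / (m + s))) atTop (𝓝 0) := by
  simpa [div_eq_mul_inv] using
    ((tendsto_atTop_add_const_left _ m tendsto_id).inv_tendsto_atTop.const_mul (m ^ 2)).neg

lemma integrableOn_sq_div_add_sq_Ioi (hm : 0 ≤ m) :
    IntegrableOn (fun t ↦ m ^ 2 / (m + t) ^ 2) (Ioi 0) := by
  rcases hm.eq_or_lt with rfl | hm
  · simp
  exact integrableOn_Ioi_deriv_of_nonneg' (fun t ht ↦ hasDerivAt_neg_sq_div_add hm ht)
    (fun t _ ↦ by positivity) (tendsto_neg_sq_div_add_atTop m)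

lemma integral_sq_div_add_sq_Ioi (hm : 0 ≤ m) :
    ∫ t in Ioi 0, m ^ 2 / (m + t) ^ 2 = m := by
  rcases hm.eq_or_lt with rfl | hm
  · simp
  rw [integral_Ioi_of_hasDerivAt_of_nonneg' (fun t ht ↦ hasDerivAt_neg_sq_div_add hm ht)
    (fun t _ ↦ by positivity) (tendsto_neg_sq_div_add_atTop m)]
  field_simp
  ring

end SqDivAddSq

theorem stmt_6_general {ι : Type*} [Countable ι]
    (μ : ι → ℝ)
    (hμ : ∀ i, 0 ≤ μ i)
    (htc : Summable μ) :
    (∀ m : ℝ, 0 < m → (∫ t in Set.Ioi (0:ℝ), m ^ 2 / (m + t) ^ 2) = m) ∧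
    MeasureTheory.IntegrableOn (fun t : ℝ => ∑' i, (μ i) ^ 2 / (μ i + t) ^ 2)
      (Set.Ioi 0) ∧
    (∫ t in Set.Ioi (0:ℝ), ∑' i, (μ i) ^ 2 / (μ i + t) ^ 2) = ∑' i, μ i := by
  have hint i := integrableOn_sq_div_add_sq_Ioi (hμ i)
  have hval i := integral_sq_div_add_sq_Ioi (hμ i)
  have hnonneg : ∀ i, 0 ≤ᵐ[volume.restrict (Ioi 0)] fun t ↦ μ i ^ 2 / (μ i + t) ^ 2 :=
    fun i ↦ ae_of_all _ fun t ↦ by positivity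
  have hsum : Summable fun i ↦ ∫ t in Ioi 0, μ i ^ 2 / (μ i + t) ^ 2 := by
    simpa only [hval] using htc
  refine ⟨fun m hm ↦ integral_sq_div_add_sq_Ioi hm.le,
    Integrable.tsum_of_nonneg hint hnonneg hsum, ?_⟩
  rw [integral_tsum_of_nonneg hint hnonneg hsum]
  exact tsum_congr hval

/-- for a positive compact self-adjoint trace-class operator `ξ` with
eigenvalues `μ n` (given by an orthonormal eigenbasis), the function
`t ↦ ‖ξ(ξ+t)⁻¹‖²_{HS} = ∑_n μ_n²/(μ_n+t)²` is integrable on `(0,∞)` and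
`∫₀^∞ ∑_n μ_n²/(μ_n+t)² dt = ∑_n μ_n = Tr ξ`, using `∫₀^∞ μ²/(μ+t)² dt = μ` for
each `μ > 0`. -/
theorem stmt_6 {H : Type*} {ι : Type*} [NormedAddCommGroup H] [InnerProductSpace ℂ H]
    [CompleteSpace H] [Countable ι]
    (ξ : H →L[ℂ] H) (hpos : ξ.IsPositive)
    (e : HilbertBasis ι ℂ H) (μ : ι → ℝ)
    (hμ : ∀ i, 0 ≤ μ i)
    (heig : ∀ i, ξ (e i) = (μ i : ℂ) • e i)
    (htc : Summable μ) :
    (∀ m : ℝ, 0 < m → (∫ t in Set.Ioi (0:ℝ), m ^ 2 / (m + t) ^ 2) = m) ∧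
    MeasureTheory.IntegrableOn (fun t : ℝ => ∑' i, (μ i) ^ 2 / (μ i + t) ^ 2)
      (Set.Ioi 0) ∧
    (∫ t in Set.Ioi (0:ℝ), ∑' i, (μ i) ^ 2 / (μ i + t) ^ 2) = ∑' i, μ i :=
  stmt_6_general μ hμ htc
end
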